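/- arXiv:1506.01434 — 3 statements merged into one kernel-verified Lean document; each statement's English description precedes it below -/
import Mathlib

section
/- Fix ξ ∈ (0,1). The function x ↦ G(x,ξ) is twice continuously differentiable on [0,1], satisfies G(0,ξ) = 0, ∂_x G(1,ξ) = 0 and ∂_x² G(0,ξ) = 0, and for every twice continuously differentiable function v : [0,1] → ℝ with v(0) = 0 and v'(1) = 0 one has ∫_0^1 ∂_x² G(x,ξ) · v''(x) dx = v(ξ). That is, G(·,ξ) is the Green's function of the steady-state simply supported–shear hinged beam with a unit Dirac load at ξ. -/
/-!
The two cubic pieces of `G(·,ξ)` agree at `ξ` together with their first and second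
derivatives, so `G(·,ξ)` is `C²` on all of `ℝ` with `∂ₓ²G(x,ξ) = -min x ξ`. The identity for `v`
is then two integrations by parts: on `[0,ξ]` against `x`, and on `[ξ,1]` against the constant
`ξ`; the boundary terms vanish because `v 0 = 0` and `v' 1 = 0`.
-/

open MeasureTheory

/-- The Green's function of the simply supported–shear hinged beam:
`G(x,ξ) = −x³/6 + xξ(1 − ξ/2)` for `x < ξ`, and `G(x,ξ) = −ξ³/6 + ξx(1 − x/2)` for
`ξ ≤ x`. -/
noncomputable def G (x ξ : ℝ) : ℝ :=
  if x < ξ then -x ^ 3 / 6 + x * ξ * (1 - ξ / 2) else -ξ ^ 3 / 6 + ξ * x * (1 - x / 2)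

open Set

theorem hasDerivAt_ite_lt {f g f' g' : ℝ → ℝ} {a x : ℝ}
    (hf : ∀ y ≤ a, HasDerivAt f (f' y) y) (hg : ∀ y ≥ a, HasDerivAt g (g' y) y)
    (hfg : f a = g a) (hfg' : f' a = g' a) :
    HasDerivAt (fun y => if y < a then f y else g y) (if x < a then f' x else g' x) x := by
  rcases lt_trichotomy x a with hx | rfl | hx
  · rw [if_pos hx]
    refine (hf x hx.le).congr_of_eventuallyEq ?_
    filter_upwards [Iio_mem_nhds hx] with y hy
    rw [if_pos (mem_Iio.mp hy)]
  · rw [if_neg (lt_irrefl x), ← hasDerivWithinAt_univ, ← Iic_union_Ici]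
    refine HasDerivWithinAt.union ?_ ?_
    · refine hfg' ▸ (hf x le_rfl).hasDerivWithinAt.congr (fun y hy => ?_) (by simp [hfg])
      rcases (mem_Iic.mp hy).lt_or_eq with hy | rfl
      · rw [if_pos hy]
      · rw [if_neg (lt_irrefl _), hfg]
    · exact (hg x le_rfl).hasDerivWithinAt.congr
        (fun y hy => by rw [if_neg (not_lt.mpr (mem_Ici.mp hy))]) (by simp)
  · rw [if_neg (not_lt.mpr hx.le)]
    refine (hg x hx.le).congr_of_eventuallyEq ?_
    filter_upwards [Ioi_mem_nhds hx] with y hy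
    rw [if_neg (not_lt.mpr (mem_Ioi.mp hy).le)]

theorem hasDerivAt_G (ξ x : ℝ) :
    HasDerivAt (G · ξ) (if x < ξ then -x ^ 2 / 2 + ξ * (1 - ξ / 2) else ξ * (1 - x)) x := by
  unfold G
  refine hasDerivAt_ite_lt (f := fun y => -y ^ 3 / 6 + y * ξ * (1 - ξ / 2))
    (g := fun y => -ξ ^ 3 / 6 + ξ * y * (1 - y / 2)) (f' := fun y => -y ^ 2 / 2 + ξ * (1 - ξ / 2))
    (g' := fun y => ξ * (1 - y)) (fun y _ => ?_) (fun y _ => ?_)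
    (by ring) (by ring)
  · exact (((hasDerivAt_pow 3 y).neg.div_const 6).add
      (((hasDerivAt_id y).mul_const ξ).mul_const (1 - ξ / 2))).congr_deriv (by simp; ring)
  · exact ((((hasDerivAt_id y).const_mul ξ).mul
      (((hasDerivAt_id y).div_const 2).const_sub 1)).const_add (-ξ ^ 3 / 6)).congr_deriv
      (by simp; ring)

theorem hasDerivAt_deriv_G (ξ x : ℝ) :
    HasDerivAt (fun y => if y < ξ then -y ^ 2 / 2 + ξ * (1 - ξ / 2) else ξ * (1 - y))
      (-min x ξ) x := by
  have h := hasDerivAt_ite_lt (x := x) (f := fun y => -y ^ 2 / 2 + ξ * (1 - ξ / 2))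
    (g := fun y => ξ * (1 - y)) (f' := fun y => -y) (g' := fun _ => -ξ)
    (fun y _ => ((hasDerivAt_pow 2 y).neg.div_const 2).add_const _ |>.congr_deriv (by simp; ring))
    (fun y _ => (((hasDerivAt_id y).const_sub 1).const_mul ξ).congr_deriv (by simp))
    (by ring) rfl
  convert h using 1
  split_ifs with hx
  · rw [min_eq_left hx.le]
  · rw [min_eq_right (not_lt.mp hx)]

theorem deriv_G (ξ : ℝ) :
    deriv (G · ξ) = fun x => if x < ξ then -x ^ 2 / 2 + ξ * (1 - ξ / 2) else ξ * (1 - x) :=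
  funext fun x => (hasDerivAt_G ξ x).deriv

theorem contDiff_G (ξ : ℝ) : ContDiff ℝ 2 (G · ξ) := by
  rw [show (2 : WithTop ℕ∞) = 1 + 1 from rfl, contDiff_succ_iff_deriv, deriv_G,
    contDiff_one_iff_deriv]
  refine ⟨fun x => (hasDerivAt_G ξ x).differentiableAt, by simp,
    fun x => (hasDerivAt_deriv_G ξ x).differentiableAt, ?_⟩
  rw [funext fun x => (hasDerivAt_deriv_G ξ x).deriv]
  exact (continuous_id.min continuous_const).neg

theorem iteratedDeriv_two_G (ξ x : ℝ) : iteratedDeriv 2 (G · ξ) x = -min x ξ := by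
  rw [iteratedDeriv_eq_iterate, Function.iterate_succ_apply', Function.iterate_one, deriv_G,
    (hasDerivAt_deriv_G ξ x).deriv]

theorem integral_min_mul_deriv {a b ξ : ℝ} (hξ : ξ ∈ Icc a b) {f f' f'' : ℝ → ℝ}
    (hf : ContinuousOn f (Icc a b)) (hf' : ContinuousOn f' (Icc a b))
    (hf'' : ContinuousOn f'' (Icc a b))
    (hdf : ∀ x ∈ Ioo a b, HasDerivAt f (f' x) x)
    (hdf' : ∀ x ∈ Ioo a b, HasDerivAt f' (f'' x) x) :
    ∫ x in a..b, min x ξ * f'' x = ξ * f' b - a * f' a - (f ξ - f a) := by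
  obtain ⟨haξ, hξb⟩ := hξ
  have hleft : Icc a ξ ⊆ Icc a b := Icc_subset_Icc_right hξb
  have hright : Icc ξ b ⊆ Icc a b := Icc_subset_Icc_left haξ
  have hmin_left : ∫ x in a..ξ, min x ξ * f'' x = ∫ x in a..ξ, x * f'' x :=
    intervalIntegral.integral_congr fun x hx => by
      rw [uIcc_of_le haξ] at hx
      rw [min_eq_left hx.2]
  have hmin_right : ∫ x in ξ..b, min x ξ * f'' x = ∫ x in ξ..b, ξ * f'' x :=
    intervalIntegral.integral_congr fun x hx => by
      rw [uIcc_of_le hξb] at hx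
      rw [min_eq_right hx.1]
  have hparts : ∫ x in a..ξ, x * f'' x = (ξ * f' ξ - f ξ) - (a * f' a - f a) :=
    intervalIntegral.integral_eq_sub_of_hasDerivAt_of_le haξ
      ((continuousOn_id.mul (hf'.mono hleft)).sub (hf.mono hleft))
      (fun x hx => by
        have hx' : x ∈ Ioo a b := ⟨hx.1, hx.2.trans_le hξb⟩
        simpa using ((hasDerivAt_id x).mul (hdf' x hx')).sub (hdf x hx'))
      ((continuousOn_id.mul (hf''.mono hleft)).intervalIntegrable_of_Icc haξ)
  have hftc : ∫ x in ξ..b, ξ * f'' x = ξ * f' b - ξ * f' ξ :=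
    intervalIntegral.integral_eq_sub_of_hasDerivAt_of_le hξb
      (continuousOn_const.mul (hf'.mono hright))
      (fun x hx => (hdf' x ⟨haξ.trans_lt hx.1, hx.2⟩).const_mul ξ)
      ((continuousOn_const.mul (hf''.mono hright)).intervalIntegrable_of_Icc hξb)
  have hint : IntervalIntegrable (fun x => min x ξ * f'' x) volume a b :=
    ((continuous_id.min continuous_const).continuousOn.mul hf'').intervalIntegrable_of_Icc
      (haξ.trans hξb)
  have hξ_mem : ξ ∈ uIcc a b := mem_uIcc_of_le haξ hξb
  rw [← intervalIntegral.integral_add_adjacent_intervals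
    (hint.mono_set (uIcc_subset_uIcc left_mem_uIcc hξ_mem))
    (hint.mono_set (uIcc_subset_uIcc hξ_mem right_mem_uIcc)),
    hmin_left, hmin_right, hparts, hftc]
  ring

theorem hasDerivAt_derivWithin_Icc {F : Type*} [NormedAddCommGroup F] [NormedSpace ℝ F]
    {f : ℝ → F} {a b x : ℝ} (hf : DifferentiableOn ℝ f (Icc a b)) (hx : x ∈ Ioo a b) :
    HasDerivAt f (derivWithin f (Icc a b) x) x :=
  (hf x (Ioo_subset_Icc_self hx)).hasDerivWithinAt.hasDerivAt (Icc_mem_nhds hx.1 hx.2)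

theorem integral_min_mul_iteratedDerivWithin_two {a b ξ : ℝ} (hab : a < b) (hξ : ξ ∈ Icc a b)
    {v : ℝ → ℝ} (hv : ContDiffOn ℝ 2 v (Icc a b)) :
    ∫ x in a..b, min x ξ * iteratedDerivWithin 2 v (Icc a b) x =
      ξ * derivWithin v (Icc a b) b - a * derivWithin v (Icc a b) a - (v ξ - v a) := by
  have hs : UniqueDiffOn ℝ (Icc a b) := uniqueDiffOn_Icc hab
  have hv' : ContDiffOn ℝ 1 (derivWithin v (Icc a b)) (Icc a b) := hv.derivWithin hs le_rfl
  refine integral_min_mul_deriv hξ hv.continuousOn hv'.continuousOn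
    (hv.continuousOn_iteratedDerivWithin le_rfl hs)
    (fun x hx => hasDerivAt_derivWithin_Icc (hv.differentiableOn (by norm_num)) hx)
    (fun x hx => ?_)
  rw [iteratedDerivWithin_eq_iterate]
  exact hasDerivAt_derivWithin_Icc (hv'.differentiableOn one_ne_zero) hx

/-- For `ξ ∈ (0,1)`: `G(·,ξ)` is `C²` on `[0,1]`, satisfies `G(0,ξ) = 0`,
`∂ₓG(1,ξ) = 0`, `∂ₓ²G(0,ξ) = 0`, and for every `C²` function `v` on `[0,1]` with
`v(0) = 0`, `v'(1) = 0`, one has `∫_0^1 ∂ₓ²G(x,ξ) v''(x) dx = v(ξ)`; i.e. `G(·,ξ)` is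
the Green's function with a unit Dirac load at `ξ`. -/
theorem stmt5 (ξ : ℝ) (hξ : ξ ∈ Set.Ioo (0:ℝ) 1) :
    ContDiffOn ℝ 2 (fun x => G x ξ) (Set.Icc 0 1) ∧
    G 0 ξ = 0 ∧
    derivWithin (fun x => G x ξ) (Set.Icc 0 1) 1 = 0 ∧
    iteratedDerivWithin 2 (fun x => G x ξ) (Set.Icc 0 1) 0 = 0 ∧
    ∀ v : ℝ → ℝ, ContDiffOn ℝ 2 v (Set.Icc 0 1) → v 0 = 0 →
      derivWithin v (Set.Icc 0 1) 1 = 0 →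
      ∫ x in (0:ℝ)..1,
        iteratedDerivWithin 2 (fun y => G y ξ) (Set.Icc 0 1) x *
          iteratedDerivWithin 2 v (Set.Icc 0 1) x = v ξ := by
  obtain ⟨hξ0, hξ1⟩ := hξ
  have hs : UniqueDiffOn ℝ (Icc (0:ℝ) 1) := uniqueDiffOn_Icc one_pos
  have hG'' : ∀ x ∈ Icc (0:ℝ) 1, iteratedDerivWithin 2 (G · ξ) (Icc 0 1) x = -min x ξ :=
    fun x hx => by
      rw [iteratedDerivWithin_eq_iteratedDeriv hs (contDiff_G ξ).contDiffAt hx,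
        iteratedDeriv_two_G]
  refine ⟨(contDiff_G ξ).contDiffOn, by simp [G, hξ0], ?_, ?_, fun v hv hv0 hv1 => ?_⟩
  · rw [(hasDerivAt_G ξ 1).hasDerivWithinAt.derivWithin (hs 1 (right_mem_Icc.mpr zero_le_one)),
      if_neg hξ1.le.not_gt, sub_self, mul_zero]
  · rw [hG'' 0 (left_mem_Icc.mpr zero_le_one), min_eq_left hξ0.le, neg_zero]
  · calc _ = ∫ x in (0:ℝ)..1, -(min x ξ * iteratedDerivWithin 2 v (Icc 0 1) x) :=
          intervalIntegral.integral_congr fun x hx => by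
            rw [uIcc_of_le zero_le_one] at hx
            rw [hG'' x hx, neg_mul]
      _ = v ξ := by
          rw [intervalIntegral.integral_neg, integral_min_mul_iteratedDerivWithin_two one_pos
            ⟨hξ0.le, hξ1.le⟩ hv, hv0, hv1]
          ring
end

section
/- Let 1 < σ < 2, let T > 0, and let φ : ℝ → ℝ be infinitely differentiable and satisfy a Gevrey bound of order σ on [0,T]. Then for every x ∈ [0,1] and every t ∈ [0,T], the series Σ_{n=1}^∞ Φ_n(x) · φ^{(2n)}(t) converges absolutely. -/
open Finset

/-- The polynomial `Φ_n(x) = (−1)^n [ Σ_{k=0}^n x^{4k+1}/((4k+1)!(4(n−k)+2)!)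
− Σ_{k=0}^n x^{4k+3}/((4k+3)!(4(n−k))!) ]`. -/
noncomputable def PhiP (n : ℕ) (x : ℝ) : ℝ :=
  (-1 : ℝ) ^ n *
    ((∑ k ∈ Finset.range (n + 1),
        x ^ (4 * k + 1) / (((4 * k + 1).factorial : ℝ) * ((4 * (n - k) + 2).factorial : ℝ))) -
     (∑ k ∈ Finset.range (n + 1),
        x ^ (4 * k + 3) / (((4 * k + 3).factorial : ℝ) * ((4 * (n - k)).factorial : ℝ))))

/-- `φ` satisfies a Gevrey bound of order `σ` on `[0,T]`: there are `M, K > 0` with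
`|φ^{(k+1)}(t)| ≤ M (k!)^σ / K^k` for all `k ≥ 0` and `t ∈ [0,T]`. -/
def GevreyBoundOn (σ T : ℝ) (φ : ℝ → ℝ) : Prop :=
  ∃ M K : ℝ, 0 < M ∧ 0 < K ∧ ∀ k : ℕ, ∀ t ∈ Set.Icc (0:ℝ) T,
    |iteratedDeriv (k + 1) φ t| ≤ M * ((k.factorial : ℝ) ^ σ) / K ^ k

lemma choose_le_two_pow' (n k : ℕ) : n.choose k ≤ 2 ^ n := by
  rcases le_or_gt k n with h | h
  · calc n.choose k ≤ ∑ i ∈ range (n+1), n.choose i :=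
        Finset.single_le_sum (f := fun i => n.choose i) (fun i _ => Nat.zero_le _)
          (Finset.mem_range.2 (Nat.lt_succ_of_le h))
    _ = 2 ^ n := Nat.sum_range_choose n
  · simp [Nat.choose_eq_zero_of_lt h]

lemma fact_prod_bound (a b N : ℕ) (h : a + b = N) :
    (1 : ℝ) / ((a.factorial : ℝ) * (b.factorial : ℝ)) ≤ 2 ^ N / (N.factorial : ℝ) := by
  subst h
  rw [div_le_div_iff₀ (by positivity) (by positivity)]
  have h1 := Nat.add_choose_mul_factorial_mul_factorial a b
  have h2 : (a + b).factorial ≤ 2 ^ (a+b) * (a.factorial * b.factorial) := by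
    calc (a+b).factorial = (a+b).choose b * a.factorial * b.factorial := h1.symm
    _ ≤ 2 ^ (a+b) * a.factorial * b.factorial := by
        have := choose_le_two_pow' (a+b) b
        exact Nat.mul_le_mul_right _ (Nat.mul_le_mul_right _ this)
    _ = 2 ^ (a+b) * (a.factorial * b.factorial) := by ring
  calc (1:ℝ) * (a+b).factorial = ((a+b).factorial : ℝ) := by ring
  _ ≤ (2 ^ (a+b) * (a.factorial * b.factorial) : ℕ) := by exact_mod_cast h2
  _ = 2 ^ (a+b) * ((a.factorial : ℝ) * (b.factorial : ℝ)) := by push_cast; ring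

lemma PhiP_bound (m : ℕ) (x : ℝ) (hx0 : 0 ≤ x) (hx1 : x ≤ 1) :
    |PhiP m x| ≤ 2 * (m + 1) * (2 ^ (4 * m + 3) / ((4 * m + 3).factorial : ℝ)) := by
  have key : ∀ (p a b : ℕ), a + b = 4 * m + 3 →
      |x ^ p / ((a.factorial : ℝ) * (b.factorial : ℝ))| ≤ 2 ^ (4*m+3) / ((4*m+3).factorial : ℝ) := by
    intro p a b hab
    rw [abs_div, abs_pow, abs_of_nonneg hx0, abs_of_nonneg (by positivity)]
    calc x ^ p / ((a.factorial : ℝ) * (b.factorial : ℝ))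
        ≤ 1 / ((a.factorial : ℝ) * (b.factorial : ℝ)) := by
          gcongr
          exact pow_le_one₀ hx0 hx1
    _ ≤ 2 ^ (4*m+3) / ((4*m+3).factorial : ℝ) := fact_prod_bound a b _ hab
  have hb : ∀ (S : Finset ℕ) (f : ℕ → ℝ), S = Finset.range (m+1) →
      (∀ k ∈ S, |f k| ≤ 2 ^ (4*m+3) / ((4*m+3).factorial : ℝ)) →
      |∑ k ∈ S, f k| ≤ (m+1) * (2 ^ (4*m+3) / ((4*m+3).factorial : ℝ)) := by
    intro S f hS hf
    calc |∑ k ∈ S, f k| ≤ ∑ k ∈ S, |f k| := Finset.abs_sum_le_sum_abs _ _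
    _ ≤ S.card • (2 ^ (4*m+3) / ((4*m+3).factorial : ℝ)) := Finset.sum_le_card_nsmul _ _ _ hf
    _ = (m+1) * (2 ^ (4*m+3) / ((4*m+3).factorial : ℝ)) := by
        rw [hS, Finset.card_range, nsmul_eq_mul]; push_cast; ring
  unfold PhiP
  rw [abs_mul, abs_pow, abs_neg, abs_one, one_pow, one_mul]
  have h1 := hb _ (fun k => x ^ (4*k+1) / (((4*k+1).factorial : ℝ) * ((4*(m-k)+2).factorial : ℝ))) rfl
    (by intro k hk; exact key _ _ _ (by have := Finset.mem_range.1 hk; omega))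
  have h2 := hb _ (fun k => x ^ (4*k+3) / (((4*k+3).factorial : ℝ) * ((4*(m-k)).factorial : ℝ))) rfl
    (by intro k hk; exact key _ _ _ (by have := Finset.mem_range.1 hk; omega))
  calc |_ - _| ≤ _ + _ := abs_sub _ _
  _ ≤ (m+1) * (2 ^ (4*m+3) / ((4*m+3).factorial : ℝ)) + (m+1) * (2 ^ (4*m+3) / ((4*m+3).factorial : ℝ)) := add_le_add h1 h2
  _ = 2 * (m + 1) * (2 ^ (4 * m + 3) / ((4 * m + 3).factorial : ℝ)) := by ring

set_option maxHeartbeats 1000000 in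
/-- For `1 < σ < 2`, `T > 0` and `φ` smooth with a Gevrey bound of order `σ` on `[0,T]`,
the series `Σ_{n≥1} Φ_n(x) φ^{(2n)}(t)` converges absolutely for all `x ∈ [0,1]`,
`t ∈ [0,T]`. -/
theorem stmt7 (σ T : ℝ) (hσ₁ : 1 < σ) (hσ₂ : σ < 2) (hT : 0 < T)
    (φ : ℝ → ℝ) (hφ : ContDiff ℝ (⊤ : ℕ∞) φ) (hG : GevreyBoundOn σ T φ) :
    ∀ x ∈ Set.Icc (0:ℝ) 1, ∀ t ∈ Set.Icc (0:ℝ) T,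
      Summable (fun n : ℕ => |PhiP (n + 1) x * iteratedDeriv (2 * (n + 1)) φ t|) := by
  obtain ⟨M, K, hM, hK, hbd⟩ := hG
  intro x hx t ht
  obtain ⟨hx0, hx1⟩ := hx
  set ε : ℝ := 2 - σ with hε
  have hε0 : (0:ℝ) < ε := by simp only [hε]; linarith
  have hεne : ε ≠ 0 := ne_of_gt hε0
  have hc : (0:ℝ) < 8 / K := by positivity
  set E : ℝ := Real.exp ((8/K) ^ (1/ε)) with hE
  have hE0 : (0:ℝ) < E := Real.exp_pos _
  have hgeo : Summable (fun n : ℕ => (64 * M * E ^ ε) * (1/2 : ℝ)^n) :=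
    (summable_geometric_of_lt_one (by norm_num) (by norm_num)).mul_left _
  refine Summable.of_nonneg_of_le (fun n => abs_nonneg _) (fun n => ?_) hgeo
  set F : ℝ := ((2*n+1).factorial : ℝ) with hF
  set G : ℝ := ((4*(n+1)+3).factorial : ℝ) with hGdef
  have hF0 : (0:ℝ) < F := by
    simp only [hF]; exact_mod_cast (2*n+1).factorial_pos
  have hG0 : (0:ℝ) < G := by
    simp only [hGdef]; exact_mod_cast (4*(n+1)+3).factorial_pos
  have hFε0 : (0:ℝ) < F ^ ε := Real.rpow_pos_of_pos hF0 ε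
  -- F^2 ≤ G
  have hFG : F ^ 2 ≤ G := by
    have h1 : (2*n+1).factorial * (2*n+1).factorial ≤ (4*(n+1)+3).factorial := by
      have heq := Nat.add_choose_mul_factorial_mul_factorial (2*n+1) (2*n+1)
      have hpos : 1 ≤ ((2*n+1)+(2*n+1)).choose (2*n+1) :=
        Nat.choose_pos (by omega)
      calc (2*n+1).factorial * (2*n+1).factorial
          ≤ ((2*n+1)+(2*n+1)).choose (2*n+1) * (2*n+1).factorial * (2*n+1).factorial := by
            nlinarith [Nat.factorial_pos (2*n+1)]
      _ = ((2*n+1)+(2*n+1)).factorial := heq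
      _ ≤ (4*(n+1)+3).factorial := Nat.factorial_le (by omega)
    calc F ^ 2 = ((2*n+1).factorial * (2*n+1).factorial : ℕ) := by
          simp only [hF]; push_cast; ring
    _ ≤ ((4*(n+1)+3).factorial : ℕ) := by exact_mod_cast h1
    _ = G := rfl
  -- F^σ = F^2 / F^ε
  have hFσ : F ^ σ = F ^ 2 / F ^ ε := by
    rw [eq_div_iff (ne_of_gt hFε0), ← Real.rpow_natCast F 2, ← Real.rpow_add hF0]
    congr 1
    simp only [hε]; push_cast; ring
  -- (8/K)^(2n+1) ≤ E^ε * F^ε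
  have hBj : ((8/K) ^ (1/ε)) ^ (2*n+1) ≤ E * F := by
    have h := Real.pow_div_factorial_le_exp ((8/K) ^ (1/ε)) (Real.rpow_nonneg hc.le (1/ε)) (2*n+1)
    rw [div_le_iff₀ (by positivity)] at h
    exact h
  have h8K : ((8:ℝ)/K)^(2*n+1) ≤ E^ε * F^ε := by
    have h0 : (0:ℝ) ≤ (8/K) ^ (1/ε) := Real.rpow_nonneg hc.le _
    calc ((8:ℝ)/K)^(2*n+1) = (((8/K) ^ (1/ε)) ^ (2*n+1) : ℝ) ^ ε := by
          rw [← Real.rpow_natCast ((8/K)^(1/ε)) (2*n+1),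
              ← Real.rpow_natCast (8/K) (2*n+1),
              ← Real.rpow_mul hc.le, ← Real.rpow_mul hc.le]
          congr 1
          field_simp
    _ ≤ (E * F) ^ ε := Real.rpow_le_rpow (pow_nonneg h0 _) hBj hε0.le
    _ = E^ε * F^ε := Real.mul_rpow hE0.le hF0.le
  have h8 : (8:ℝ)^(2*n+1) ≤ E^ε * F^ε * K^(2*n+1) := by
    have hKp : (0:ℝ) < K^(2*n+1) := by positivity
    calc (8:ℝ)^(2*n+1) = ((8:ℝ)/K)^(2*n+1) * K^(2*n+1) := by
          rw [div_pow]; field_simp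
    _ ≤ (E^ε * F^ε) * K^(2*n+1) := by
          exact mul_le_mul_of_nonneg_right h8K hKp.le
  have hkey : F ^ σ * 8^(2*n+1) ≤ E^ε * (G * K^(2*n+1)) := by
    calc F ^ σ * 8^(2*n+1) = (F^2 * 8^(2*n+1)) / F^ε := by rw [hFσ]; ring
    _ ≤ (G * (E^ε * F^ε * K^(2*n+1))) / F^ε := by
          have hnum : F^2 * 8^(2*n+1) ≤ G * (E^ε * F^ε * K^(2*n+1)) :=
            mul_le_mul hFG h8 (by positivity) hG0.le
          exact (div_le_div_iff_of_pos_right hFε0).2 hnum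
    _ = E^ε * (G * K^(2*n+1)) := by field_simp
  have hkey2 : F ^ σ / (G * K^(2*n+1)) ≤ E^ε * (1/8:ℝ)^(2*n+1) := by
    rw [div_le_iff₀ (by positivity)]
    calc F ^ σ = F ^ σ * 8^(2*n+1) * (1/8:ℝ)^(2*n+1) := by
          rw [one_div, inv_pow]; field_simp
    _ ≤ E^ε * (G * K^(2*n+1)) * (1/8:ℝ)^(2*n+1) :=
          mul_le_mul_of_nonneg_right hkey (by positivity)
    _ = E^ε * (1/8:ℝ)^(2*n+1) * (G * K^(2*n+1)) := by ring
  -- the derivative bound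
  have hderiv : |iteratedDeriv (2*n+1+1) φ t| ≤ M * F ^ σ / K ^ (2*n+1) := hbd (2*n+1) t ht
  have hPhi := PhiP_bound (n+1) x hx0 hx1
  -- numeric facts
  have e1 : (2:ℝ)^(4*(n+1)+3)*(1/8:ℝ)^(2*n+1) = 16*(1/4:ℝ)^n := by
    have key : (2:ℝ)^(4*(n+1)+3) * 4^n = 16*8^(2*n+1) := by
      rw [show (4:ℝ)=2^2 by norm_num, show (8:ℝ)=2^3 by norm_num,
          show (16:ℝ)=2^4 by norm_num, ← pow_mul, ← pow_mul, ← pow_add, ← pow_add]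
      congr 1
      ring
    have h4 : ((1:ℝ)/4)^n = ((4:ℝ)^n)⁻¹ := by rw [one_div, inv_pow]
    have h8' : ((1:ℝ)/8)^(2*n+1) = ((8:ℝ)^(2*n+1))⁻¹ := by rw [one_div, inv_pow]
    rw [h4, h8']
    field_simp
    linarith [key]
  have e2 : ((n:ℝ)+2)*(1/4:ℝ)^n ≤ 2*(1/2:ℝ)^n := by
    have h1 : ((n:ℝ)+2) ≤ 2*2^n := by
      have := Nat.lt_two_pow_self (n := n+1)
      have h2 : (n:ℝ)+2 ≤ (2:ℝ)^(n+1) := by exact_mod_cast this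
      calc ((n:ℝ)+2) ≤ (2:ℝ)^(n+1) := h2
      _ = 2*2^n := by ring
    calc ((n:ℝ)+2)*(1/4:ℝ)^n ≤ (2*2^n)*(1/4:ℝ)^n := by
          exact mul_le_mul_of_nonneg_right h1 (by positivity)
    _ = 2*((2:ℝ)*(1/4:ℝ))^n := by rw [mul_pow]; ring
    _ = 2*(1/2:ℝ)^n := by norm_num
  -- assemble
  rw [show 2*(n+1) = 2*n+1+1 from by ring, abs_mul]
  calc |PhiP (n+1) x| * |iteratedDeriv (2*n+1+1) φ t|
      ≤ (2 * ((n+1:ℕ) + 1) * (2 ^ (4*(n+1)+3) / G)) * (M * F ^ σ / K ^ (2*n+1)) :=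
        mul_le_mul hPhi hderiv (abs_nonneg _) (by positivity)
  _ = (2 * ((n:ℝ)+2) * 2 ^ (4*(n+1)+3) * M) * (F ^ σ / (G * K ^ (2*n+1))) := by
        push_cast; ring
  _ ≤ (2 * ((n:ℝ)+2) * 2 ^ (4*(n+1)+3) * M) * (E^ε * (1/8:ℝ)^(2*n+1)) := by
        refine mul_le_mul_of_nonneg_left hkey2 ?_
        positivity
  _ = 2 * M * E^ε * (((n:ℝ)+2) * ((2:ℝ)^(4*(n+1)+3)*(1/8:ℝ)^(2*n+1))) := by ring
  _ = 32 * M * E^ε * (((n:ℝ)+2) * (1/4:ℝ)^n) := by rw [e1]; ring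
  _ ≤ 32 * M * E^ε * (2*(1/2:ℝ)^n) := by
        refine mul_le_mul_of_nonneg_left e2 ?_
        positivity
  _ = (64 * M * E ^ ε) * (1/2 : ℝ)^n := by ring
end

section
/- Let 1 < σ < 2, let T > 0, and let φ : ℝ → ℝ be infinitely differentiable and satisfy a Gevrey bound of order σ on [0,T]. Then for every t ∈ [0,T], the series Σ_{n=1}^∞ Ψ_n · φ^{(2n)}(t) converges absolutely. -/
open Finset

lemma fact_fact_bound (a b : ℕ) :
    (1 : ℝ) / ((a.factorial : ℝ) * (b.factorial : ℝ)) ≤ 2 ^ (a + b) / ((a+b).factorial : ℝ) := by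
  have key : ((a+b).factorial : ℝ) ≤ 2 ^ (a+b) * ((a.factorial : ℝ) * (b.factorial : ℝ)) := by
    have h1 : (a+b).choose a * a.factorial * b.factorial = (a+b).factorial := by
      have := Nat.choose_mul_factorial_mul_factorial (Nat.le_add_right a b)
      rwa [Nat.add_sub_cancel_left] at this
    have h2 : (a+b).choose a ≤ 2 ^ (a+b) := choose_le_two_pow' _ _
    have h3 : (a+b).factorial ≤ 2 ^ (a+b) * (a.factorial * b.factorial) := by
      calc (a+b).factorial = (a+b).choose a * a.factorial * b.factorial := h1.symm
        _ ≤ 2 ^ (a+b) * a.factorial * b.factorial :=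
            Nat.mul_le_mul_right _ (Nat.mul_le_mul_right _ h2)
        _ = 2 ^ (a+b) * (a.factorial * b.factorial) := by ring
    calc ((a+b).factorial : ℝ) ≤ ((2 ^ (a+b) * (a.factorial * b.factorial) : ℕ) : ℝ) := by
          exact_mod_cast h3
      _ = 2 ^ (a+b) * ((a.factorial:ℝ) * (b.factorial:ℝ)) := by push_cast; ring
  have hab : (0:ℝ) < ((a+b).factorial : ℝ) := by positivity
  have hfab : (0:ℝ) < (a.factorial : ℝ) * (b.factorial : ℝ) := by positivity
  rw [div_le_div_iff₀ hfab hab]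
  nlinarith

/-- `Ψ_n = (−1)^n [ Σ_{k=1}^n 1/((4k−2)!(4(n−k)+2)!) − Σ_{k=0}^n 1/((4k)!(4(n−k))!) ]`. -/
noncomputable def PsiN (n : ℕ) : ℝ :=
  (-1 : ℝ) ^ n *
    ((∑ k ∈ Finset.Icc 1 n,
        (1 : ℝ) / (((4 * k - 2).factorial : ℝ) * ((4 * (n - k) + 2).factorial : ℝ))) -
     (∑ k ∈ Finset.range (n + 1),
        (1 : ℝ) / (((4 * k).factorial : ℝ) * ((4 * (n - k)).factorial : ℝ))))

lemma psiN_abs_le (m : ℕ) :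
    |PsiN m| ≤ (2*(m:ℝ)+1) * 16^m / ((4*m).factorial : ℝ) := by
  have hQ : (0:ℝ) < ((4*m).factorial : ℝ) := by positivity
  have hA : ∑ k ∈ Finset.Icc 1 m,
      (1:ℝ)/(((4*k-2).factorial:ℝ) * ((4*(m-k)+2).factorial:ℝ))
        ≤ (m:ℝ) * 16^m / ((4*m).factorial:ℝ) := by
    calc ∑ k ∈ Finset.Icc 1 m,
        (1:ℝ)/(((4*k-2).factorial:ℝ) * ((4*(m-k)+2).factorial:ℝ))
        ≤ ∑ _k ∈ Finset.Icc 1 m, (16:ℝ)^m / ((4*m).factorial:ℝ) := by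
          apply Finset.sum_le_sum
          intro k hk
          rw [Finset.mem_Icc] at hk
          have h := fact_fact_bound (4*k-2) (4*(m-k)+2)
          have he : (4*k-2) + (4*(m-k)+2) = 4*m := by omega
          rw [he] at h
          calc (1:ℝ)/(((4*k-2).factorial:ℝ) * ((4*(m-k)+2).factorial:ℝ))
              ≤ 2^(4*m) / ((4*m).factorial:ℝ) := h
            _ = 16^m / ((4*m).factorial:ℝ) := by
                rw [pow_mul]; norm_num
      _ = (m:ℝ) * 16^m / ((4*m).factorial:ℝ) := by
          rw [Finset.sum_const, Nat.card_Icc, nsmul_eq_mul]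
          simp; ring
  have hB : ∑ k ∈ Finset.range (m+1),
      (1:ℝ)/(((4*k).factorial:ℝ) * ((4*(m-k)).factorial:ℝ))
        ≤ ((m:ℝ)+1) * 16^m / ((4*m).factorial:ℝ) := by
    calc ∑ k ∈ Finset.range (m+1),
        (1:ℝ)/(((4*k).factorial:ℝ) * ((4*(m-k)).factorial:ℝ))
        ≤ ∑ _k ∈ Finset.range (m+1), (16:ℝ)^m / ((4*m).factorial:ℝ) := by
          apply Finset.sum_le_sum
          intro k hk
          rw [Finset.mem_range] at hk
          have h := fact_fact_bound (4*k) (4*(m-k))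
          have he : (4*k) + (4*(m-k)) = 4*m := by omega
          rw [he] at h
          calc (1:ℝ)/(((4*k).factorial:ℝ) * ((4*(m-k)).factorial:ℝ))
              ≤ 2^(4*m) / ((4*m).factorial:ℝ) := h
            _ = 16^m / ((4*m).factorial:ℝ) := by
                rw [pow_mul]; norm_num
      _ = ((m:ℝ)+1) * 16^m / ((4*m).factorial:ℝ) := by
          rw [Finset.sum_const, Finset.card_range, nsmul_eq_mul]
          push_cast; ring
  have hA0 : (0:ℝ) ≤ ∑ k ∈ Finset.Icc 1 m,
      (1:ℝ)/(((4*k-2).factorial:ℝ) * ((4*(m-k)+2).factorial:ℝ)) :=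
    Finset.sum_nonneg fun k _ => by positivity
  have hB0 : (0:ℝ) ≤ ∑ k ∈ Finset.range (m+1),
      (1:ℝ)/(((4*k).factorial:ℝ) * ((4*(m-k)).factorial:ℝ)) :=
    Finset.sum_nonneg fun k _ => by positivity
  rw [PsiN, abs_mul, abs_pow, abs_neg, abs_one, one_pow, one_mul]
  refine (abs_sub _ _).trans ?_
  rw [abs_of_nonneg hA0, abs_of_nonneg hB0]
  have h16 : (0:ℝ) ≤ (16:ℝ)^m := by positivity
  calc _ ≤ (m:ℝ) * 16^m / ((4*m).factorial:ℝ) + ((m:ℝ)+1) * 16^m / ((4*m).factorial:ℝ) :=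
        add_le_add hA hB
    _ = (2*(m:ℝ)+1) * 16^m / ((4*m).factorial : ℝ) := by ring

/-- For `1 < σ < 2`, `T > 0` and `φ` smooth with a Gevrey bound of order `σ` on `[0,T]`,
the series `Σ_{n≥1} Ψ_n φ^{(2n)}(t)` converges absolutely for all `t ∈ [0,T]`. -/
theorem stmt8 (σ T : ℝ) (hσ₁ : 1 < σ) (hσ₂ : σ < 2) (hT : 0 < T)
    (φ : ℝ → ℝ) (hφ : ContDiff ℝ (⊤ : ℕ∞) φ) (hG : GevreyBoundOn σ T φ) :
    ∀ t ∈ Set.Icc (0:ℝ) T,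
      Summable (fun n : ℕ => |PsiN (n + 1) * iteratedDeriv (2 * (n + 1)) φ t|) := by
  intro t ht
  obtain ⟨M, K, hM, hK, hb⟩ := hG
  have hε0 : (0:ℝ) < 2 - σ := by linarith
  set ε : ℝ := 2 - σ with hεdef
  set y : ℝ := 64 / K^2 with hydef
  have hy : 0 < y := by positivity
  set z : ℝ := y ^ (1/ε) with hzdef
  have hz : 0 < z := Real.rpow_pos_of_pos hy _
  set a : ℕ → ℝ := fun n => |PsiN (n + 1) * iteratedDeriv (2 * (n + 1)) φ t| with hadef
  set g : ℕ → ℝ := fun n => (48 * M / K) * ((z^n / (n.factorial : ℝ)) ^ ε) with hgdef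
  have ha0 : ∀ n, 0 ≤ a n := fun n => abs_nonneg _
  -- rewriting lemma
  have hzrw : ∀ n : ℕ, (z^n / (n.factorial : ℝ)) ^ ε
      = y^n * ((n.factorial:ℝ)) ^ (σ - 2) := by
    intro n
    have hf0 : (0:ℝ) < (n.factorial : ℝ) := by positivity
    have h2 : (z^n : ℝ) ^ ε = y ^ n := by
      have hexp : (1/ε) * ((n:ℝ)*ε) = (n:ℝ) := by field_simp
      rw [← Real.rpow_natCast z n, ← Real.rpow_mul hz.le, hzdef,
          ← Real.rpow_mul hy.le, hexp, Real.rpow_natCast]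
    have hσε : σ - 2 = -ε := by rw [hεdef]; ring
    rw [Real.div_rpow (by positivity) hf0.le, h2, hσε, Real.rpow_neg hf0.le,
        div_eq_mul_inv]
  -- the key pointwise bound
  have hkey : ∀ n : ℕ, a n * 2^n ≤ g n := by
    intro n
    have hF0 : (0:ℝ) < ((2*n+1).factorial : ℝ) := by positivity
    have hQ0 : (0:ℝ) < ((4*(n+1)).factorial : ℝ) := by positivity
    have hn0 : (0:ℝ) < (n.factorial : ℝ) := by positivity
    -- derivative bound
    have hd : |iteratedDeriv (2 * (n + 1)) φ t|
        ≤ M * (((2*n+1).factorial : ℝ) ^ σ) / K ^ (2*n+1) := by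
      have h := hb (2*n+1) t ht
      have he : 2*n+1+1 = 2*(n+1) := by ring
      rwa [he] at h
    -- PsiN bound
    have hp : |PsiN (n+1)| ≤ (2*((n:ℝ)+1)+1) * 16^(n+1) / ((4*(n+1)).factorial : ℝ) := by
      have := psiN_abs_le (n+1)
      push_cast at this ⊢
      convert this using 3
    -- F^σ / Q ≤ F^(σ-2)
    have hFQ : ((2*n+1).factorial : ℝ) ^ σ / ((4*(n+1)).factorial : ℝ)
        ≤ ((2*n+1).factorial : ℝ) ^ (σ - 2) := by
      have hQF : ((2*n+1).factorial : ℝ)^(2:ℕ) ≤ ((4*(n+1)).factorial : ℝ) := by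
        have hd1 : (2*n+1).factorial * (2*n+1).factorial ∣ (2*n+1 + (2*n+1)).factorial :=
          Nat.factorial_mul_factorial_dvd_factorial_add _ _
        have hle1 := Nat.le_of_dvd (Nat.factorial_pos _) hd1
        have hle2 : (2*n+1 + (2*n+1)).factorial ≤ (4*(n+1)).factorial :=
          Nat.factorial_le (by omega)
        have := hle1.trans hle2
        calc ((2*n+1).factorial : ℝ)^(2:ℕ)
            = (((2*n+1).factorial * (2*n+1).factorial : ℕ) : ℝ) := by push_cast; ring
          _ ≤ ((4*(n+1)).factorial : ℝ) := by exact_mod_cast this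
      rw [div_le_iff₀ hQ0]
      calc ((2*n+1).factorial : ℝ) ^ σ
          = ((2*n+1).factorial : ℝ) ^ (σ - 2) * ((2*n+1).factorial : ℝ) ^ (2:ℝ) := by
            rw [← Real.rpow_add hF0]; ring_nf
        _ ≤ ((2*n+1).factorial : ℝ) ^ (σ - 2) * ((4*(n+1)).factorial : ℝ) := by
            have h2 : ((2*n+1).factorial : ℝ) ^ (2:ℝ) = ((2*n+1).factorial : ℝ)^(2:ℕ) := by
              rw [← Real.rpow_natCast _ 2]; norm_num
            rw [h2]
            exact mul_le_mul_of_nonneg_left hQF (Real.rpow_nonneg hF0.le _)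
    -- F^(σ-2) ≤ (n!)^(σ-2)
    have hFn : ((2*n+1).factorial : ℝ) ^ (σ - 2) ≤ ((n.factorial : ℝ)) ^ (σ - 2) := by
      apply Real.rpow_le_rpow_of_nonpos hn0
      · exact_mod_cast Nat.factorial_le (by omega)
      · linarith
    -- arithmetic bound on coefficients
    have hcoef : (2*((n:ℝ)+1)+1) * 16^(n+1) * 2^n / K^(2*n+1)
        ≤ 48 / K * y^n := by
      have hnn : ((n:ℝ)+1) ≤ 2^n := by
        have : n + 1 ≤ 2^n := Nat.lt_two_pow_self (n := n)
        exact_mod_cast this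
      have h2n : (0:ℝ) < (2:ℝ)^n := by positivity
      have hnum : (2*((n:ℝ)+1)+1) * 16^(n+1) * 2^n ≤ 48 * 64^n := by
        have h1 : (2*((n:ℝ)+1)+1) ≤ 3 * 2^n := by nlinarith
        calc (2*((n:ℝ)+1)+1) * 16^(n+1) * 2^n
            ≤ (3 * 2^n) * 16^(n+1) * 2^n := by
              apply mul_le_mul_of_nonneg_right _ h2n.le
              apply mul_le_mul_of_nonneg_right h1 (by positivity)
          _ = 48 * 64^n := by
              rw [show (64:ℝ) = 2*16*2 by norm_num, mul_pow, mul_pow, pow_succ]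
              ring
      have hyn : y^n = 64^n / K^(2*n) := by
        rw [hydef, div_pow, ← pow_mul, mul_comm 2 n]
      rw [hyn]
      rw [div_le_iff₀ (by positivity), pow_succ]
      have hK2n : (0:ℝ) < K^(2*n) := by positivity
      calc (2*((n:ℝ)+1)+1) * 16^(n+1) * 2^n ≤ 48 * 64^n := hnum
        _ = 48 / K * (64^n / K^(2*n)) * (K^(2*n) * K) := by field_simp
    -- assemble
    have step1 : a n ≤ (2*((n:ℝ)+1)+1) * 16^(n+1) / ((4*(n+1)).factorial : ℝ)
        * (M * (((2*n+1).factorial : ℝ) ^ σ) / K ^ (2*n+1)) := by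
      rw [show a n = |PsiN (n+1)| * |iteratedDeriv (2*(n+1)) φ t| from abs_mul _ _]
      exact mul_le_mul hp hd (abs_nonneg _) (by positivity)
    have hrpowpos : (0:ℝ) < ((2*n+1).factorial : ℝ) ^ σ := Real.rpow_pos_of_pos hF0 _
    have step2 : a n * 2^n
        ≤ ((2*((n:ℝ)+1)+1) * 16^(n+1) * 2^n / K^(2*n+1)) * M
            * (((2*n+1).factorial : ℝ) ^ σ / ((4*(n+1)).factorial : ℝ)) := by
      have := mul_le_mul_of_nonneg_right step1 (le_of_lt (show (0:ℝ) < 2^n by positivity))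
      calc a n * 2^n ≤ _ := this
        _ = ((2*((n:ℝ)+1)+1) * 16^(n+1) * 2^n / K^(2*n+1)) * M
            * (((2*n+1).factorial : ℝ) ^ σ / ((4*(n+1)).factorial : ℝ)) := by
          field_simp
    have step3 : a n * 2^n
        ≤ ((2*((n:ℝ)+1)+1) * 16^(n+1) * 2^n / K^(2*n+1)) * M
            * (((n.factorial : ℝ)) ^ (σ - 2)) := by
      refine step2.trans ?_
      apply mul_le_mul_of_nonneg_left (hFQ.trans hFn)
      positivity
    refine step3.trans ?_
    show _ ≤ 48 * M / K * ((z ^ n / ((n.factorial : ℕ):ℝ)) ^ ε)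
    rw [hzrw n]
    calc ((2*((n:ℝ)+1)+1) * 16^(n+1) * 2^n / K^(2*n+1)) * M
            * (((n.factorial : ℝ)) ^ (σ - 2))
        ≤ (48 / K * y^n) * M * (((n.factorial : ℝ)) ^ (σ - 2)) := by
          apply mul_le_mul_of_nonneg_right _ (Real.rpow_nonneg hn0.le _)
          exact mul_le_mul_of_nonneg_right hcoef hM.le
      _ = 48 * M / K * (y^n * ((n.factorial : ℝ)) ^ (σ - 2)) := by ring
  -- tendsto of g to 0
  have hgt : Filter.Tendsto g Filter.atTop (nhds 0) := by
    have h0 := FloorSemiring.tendsto_pow_div_factorial_atTop (K := ℝ) z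
    have h1 : Filter.Tendsto (fun x : ℝ => x ^ ε) (nhds 0) (nhds 0) := by
      have := (Real.continuousAt_rpow_const 0 ε (Or.inr hε0.le)).tendsto
      rwa [Real.zero_rpow hε0.ne'] at this
    have h2 := h1.comp h0
    have h3 := h2.const_mul (48 * M / K)
    rwa [mul_zero] at h3
  -- squeeze
  have hat : Filter.Tendsto (fun n => a n * 2^n) Filter.atTop (nhds 0) :=
    squeeze_zero (fun n => by positivity) hkey hgt
  have hev : ∀ᶠ n in Filter.atTop, a n * 2^n < 1 :=
    hat.eventually_lt_const one_pos
  have hev2 : ∀ᶠ n in Filter.atTop, ‖a n‖ ≤ 1 * ‖((1:ℝ)/2)^n‖ := by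
    filter_upwards [hev] with n hn
    have h2n : (0:ℝ) < (2:ℝ)^n := by positivity
    rw [Real.norm_eq_abs, Real.norm_eq_abs, abs_of_nonneg (ha0 n),
        abs_of_nonneg (by positivity : (0:ℝ) ≤ ((1:ℝ)/2)^n), one_mul,
        div_pow, one_pow]
    rw [le_div_iff₀ h2n]
    exact hn.le
  exact summable_of_isBigO_nat
    (summable_geometric_of_lt_one (by norm_num) (by norm_num))
    (Asymptotics.isBigO_iff.mpr ⟨1, hev2⟩)
end
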